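/- arXiv:2002.12065 — 6 statements merged into one kernel-verified Lean document; each statement's English description precedes it below -/
import Mathlib

section
/- For complex $l_1, l_2, l_3$ such that all of $l_1, l_2, l_3, l_1 l_2, l_2 l_3, l_1 l_2 l_3$ differ from $1$, and integer $L \geq 3$, the sum $B_3(L) = \sum_{0 \le x_1 < x_2 < x_3 \le L-1} l_1^{x_1} l_2^{x_2} l_3^{x_3}$ equals $\frac{(l_1 l_2 l_3)^L}{(l_1 l_2 l_3 - 1)(l_1 l_2 - 1)(l_1 - 1)} - \frac{(l_2 l_3)^L}{(l_2 l_3 - 1)(l_2 - 1)(l_1 - 1)} + \frac{l_3^L l_2}{(l_3 - 1)(l_2 - 1)(l_1 l_2 - 1)} - \frac{l_2 l_3^2}{(l_1 l_2 l_3 - 1)(l_2 l_3 - 1)(l_3 - 1)}$. -/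
open Complex Finset

/-
Induction on the chain length `L`: the configurations with the last particle on the new site `L`
contribute the two-particle sum up to `L` times `l₃ ^ L`, so the closed forms only have to
satisfy a geometric recursion, which is a rational identity in the `lᵢ`.
-/

theorem sum_range_sum_range_pow_mul_pow {K : Type*} [Field K] {a b : K}
    (ha : a ≠ 1) (hb : b ≠ 1) (hab : a * b ≠ 1) (n : ℕ) :
    ∑ x₂ ∈ range n, ∑ x₁ ∈ range x₂, a ^ x₁ * b ^ x₂ =
      (a * b) ^ n / ((a * b - 1) * (a - 1)) - b ^ n / ((b - 1) * (a - 1))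
        + b / ((b - 1) * (a * b - 1)) := by
  induction n with
  | zero => field_simp; ring
  | succ n ih =>
    rw [sum_range_succ, ih, ← sum_mul, geom_sum_eq ha]
    field_simp
    ring

theorem three_particle_kinematical_sum_general (l₁ l₂ l₃ : ℂ)
    (h1 : l₁ ≠ 1) (h2 : l₂ ≠ 1) (h3 : l₃ ≠ 1)
    (h12 : l₁ * l₂ ≠ 1) (h23 : l₂ * l₃ ≠ 1) (h123 : l₁ * l₂ * l₃ ≠ 1)
    (L : ℕ) :
    ∑ x₃ ∈ Finset.range L, ∑ x₂ ∈ Finset.range x₃, ∑ x₁ ∈ Finset.range x₂,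
        l₁ ^ x₁ * l₂ ^ x₂ * l₃ ^ x₃ =
      (l₁ * l₂ * l₃) ^ L / ((l₁ * l₂ * l₃ - 1) * (l₁ * l₂ - 1) * (l₁ - 1))
        - (l₂ * l₃) ^ L / ((l₂ * l₃ - 1) * (l₂ - 1) * (l₁ - 1))
        + l₃ ^ L * l₂ / ((l₃ - 1) * (l₂ - 1) * (l₁ * l₂ - 1))
        - l₂ * l₃ ^ 2 / ((l₁ * l₂ * l₃ - 1) * (l₂ * l₃ - 1) * (l₃ - 1)) := by
  induction L with
  | zero => field_simp; ring
  | succ L ih =>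
    have last_site : ∑ x₂ ∈ range L, ∑ x₁ ∈ range x₂, l₁ ^ x₁ * l₂ ^ x₂ * l₃ ^ L =
        (∑ x₂ ∈ range L, ∑ x₁ ∈ range x₂, l₁ ^ x₁ * l₂ ^ x₂) * l₃ ^ L := by
      simp only [sum_mul]
    rw [sum_range_succ, ih, last_site, sum_range_sum_range_pow_mul_pow h1 h2 h12]
    field_simp
    ring

theorem three_particle_kinematical_sum (l₁ l₂ l₃ : ℂ)
    (h1 : l₁ ≠ 1) (h2 : l₂ ≠ 1) (h3 : l₃ ≠ 1)
    (h12 : l₁ * l₂ ≠ 1) (h23 : l₂ * l₃ ≠ 1) (h123 : l₁ * l₂ * l₃ ≠ 1)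
    (L : ℕ) (hL : 3 ≤ L) :
    ∑ x₃ ∈ Finset.range L, ∑ x₂ ∈ Finset.range x₃, ∑ x₁ ∈ Finset.range x₂,
        l₁ ^ x₁ * l₂ ^ x₂ * l₃ ^ x₃ =
      (l₁ * l₂ * l₃) ^ L / ((l₁ * l₂ * l₃ - 1) * (l₁ * l₂ - 1) * (l₁ - 1))
        - (l₂ * l₃) ^ L / ((l₂ * l₃ - 1) * (l₂ - 1) * (l₁ - 1))
        + l₃ ^ L * l₂ / ((l₃ - 1) * (l₂ - 1) * (l₁ * l₂ - 1))
        - l₂ * l₃ ^ 2 / ((l₁ * l₂ * l₃ - 1) * (l₂ * l₃ - 1) * (l₃ - 1)) :=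
  three_particle_kinematical_sum_general l₁ l₂ l₃ h1 h2 h3 h12 h23 h123 L
end

section
/- Let $l_1, \dots, l_N$ be complex numbers such that for every nonempty interval $\{j, j+1, \dots, k\} \subseteq \{1,\dots,N\}$ the product $l_j l_{j+1} \cdots l_k \neq 1$. Then for all integers $L \geq N$, $\sum_{0 \le x_1 < \cdots < x_N \le L-1} \prod_{i=1}^N l_i^{x_i} = \sum_{j=0}^N \frac{(-1)^j \left(\prod_{k=j+1}^N l_k\right)^L \prod_{k=2}^j l_k^{k-1}}{\prod_{k=j+1}^N \left(\prod_{o=j+1}^k l_o - 1\right) \cdot \prod_{k=1}^j \left(\prod_{o=k}^j l_o - 1\right)}$. -/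
/-!
Let `E L` be the difference of the two sides for `N = n + 1` particles. Splitting the tuples
according to whether the last particle sits at site `L`, or the first one at site `0`, gives
`B (n+1) (L+1) = B (n+1) L + l_{n+1}^L B n L` and
`B (n+1) (L+1) = (l_1 ⋯ l_{n+1}) B (n+1) L + (l_2 ⋯ l_{n+1}) B n L` (shifted amplitudes), and the
closed form satisfies both recurrences term by term. By induction on `N` they become
`E (L+1) = E L` and `E (L+1) = (l_1 ⋯ l_{n+1}) E L`, so `E = 0` because `l_1 ⋯ l_{n+1} ≠ 1`.
-/

open Complex Finset

/-- The kinematical sum over strictly increasing `N`-tuples of positions in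
`{0, …, L-1}`, with 1-based particle labels: particle `i : Fin N` carries the
amplitude `l (i+1)`. -/
noncomputable def Bstrict (N L : ℕ) (l : ℕ → ℂ) : ℂ :=
  ∑ x ∈ (Fintype.piFinset fun _ : Fin N => Finset.range L).filter
      (fun x => ∀ i j : Fin N, i < j → x i < x j),
    ∏ i : Fin N, l ((i : ℕ) + 1) ^ x i

theorem Finset.prod_Icc_add_one {M : Type*} [CommMonoid M] (f : ℕ → M) (a b : ℕ) :
    ∏ k ∈ Icc a b, f (k + 1) = ∏ k ∈ Icc (a + 1) (b + 1), f k := by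
  rw [← map_add_right_Icc, prod_map]
  rfl

theorem Finset.prod_Icc_mul_prod_Icc {M : Type*} [CommMonoid M] (f : ℕ → M) {a m b : ℕ}
    (ham : a ≤ m + 1) (hmb : m ≤ b) :
    (∏ k ∈ Icc a m, f k) * ∏ k ∈ Icc (m + 1) b, f k = ∏ k ∈ Icc a b, f k := by
  simp only [← Ico_add_one_right_eq_Icc]
  exact prod_Ico_consecutive f ham (by omega)

theorem Fin.prod_univ_add_one_eq_prod_Icc {M : Type*} [CommMonoid M] (f : ℕ → M) (n : ℕ) :
    ∏ i : Fin n, f (i + 1) = ∏ k ∈ Icc 1 n, f k := by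
  rw [Fin.prod_univ_eq_prod_range (fun i => f (i + 1)), range_eq_Ico, prod_Ico_add',
    zero_add, Ico_add_one_right_eq_Icc]

theorem Fin.strictMono_snoc {α : Type*} [Preorder α] {n : ℕ} {f : Fin n → α} {a : α} :
    StrictMono (Fin.snoc f a : Fin (n + 1) → α) ↔ StrictMono f ∧ ∀ i, f i < a := by
  rw [← Fin.insertNth_last', Fin.strictMono_insertNth_iff]
  simp [Fin.castSucc_lt_last, (Fin.castSucc_lt_last _).not_ge]

theorem mul_div_mul_sub_one {K : Type*} [Field K] {u : K} (hu : u ≠ 1) (x d e : K) :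
    u * (x / (d * (u - 1) * e)) = x / (d * (u - 1) * e) + x / (d * e) := by
  have hu' : u - 1 ≠ 0 := sub_ne_zero.2 hu
  rw [mul_right_comm d, ← mul_div_mul_right x (d * e) hu', ← add_div]
  ring

theorem prod_Icc_pow_sub_one_succ (l : ℕ → ℂ) (j : ℕ) :
    ∏ k ∈ Icc 2 (j + 1), l k ^ (k - 1)
      = (∏ k ∈ Icc 2 (j + 1), l k) * ∏ k ∈ Icc 2 j, l (k + 1) ^ (k - 1) := by
  have hshift : ∏ k ∈ Icc 2 j, l (k + 1) ^ (k - 1) = ∏ k ∈ Icc 2 (j + 1), l k ^ (k - 2) := by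
    calc ∏ k ∈ Icc 2 j, l (k + 1) ^ (k - 1) = ∏ k ∈ Icc 3 (j + 1), l k ^ (k - 2) :=
          prod_Icc_add_one (fun k => l k ^ (k - 2)) 2 j
      _ = ∏ k ∈ Icc 2 (j + 1), l k ^ (k - 2) := by
          refine prod_subset (Icc_subset_Icc_left (by norm_num)) fun k hk hk' => ?_
          simp only [mem_Icc] at hk hk'
          rw [show k = 2 by omega, pow_zero]
  rw [hshift, ← prod_mul_distrib]
  refine prod_congr rfl fun k hk => ?_
  rw [← pow_succ', show k - 2 + 1 = k - 1 by simp only [mem_Icc] at hk; omega]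

def strictTuples (N L : ℕ) : Finset (Fin N → ℕ) :=
  (Fintype.piFinset fun _ : Fin N => range L).filter (fun x => ∀ i j : Fin N, i < j → x i < x j)

theorem mem_strictTuples {N L : ℕ} {x : Fin N → ℕ} :
    x ∈ strictTuples N L ↔ StrictMono x ∧ ∀ i, x i < L := by
  simp only [strictTuples, mem_filter, Fintype.mem_piFinset, mem_range, StrictMono]
  tauto

theorem Bstrict_eq_sum_strictTuples (N L : ℕ) (l : ℕ → ℂ) :
    Bstrict N L l = ∑ x ∈ strictTuples N L, ∏ i : Fin N, l (i + 1) ^ x i :=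
  rfl

theorem Bstrict_zero (L : ℕ) (l : ℕ → ℂ) : Bstrict 0 L l = 1 := by
  rw [Bstrict_eq_sum_strictTuples, show strictTuples 0 L = {Fin.elim0} from
    eq_singleton_iff_unique_mem.2 ⟨mem_strictTuples.2 ⟨fun i => i.elim0, fun i => i.elim0⟩,
      fun x _ => funext fun i => i.elim0⟩]
  simp

theorem strictTuples_filter_last_ne (n L : ℕ) :
    (strictTuples (n + 1) (L + 1)).filter (fun x => x (Fin.last n) ≠ L)
      = strictTuples (n + 1) L := by
  ext x
  simp only [mem_filter, mem_strictTuples]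
  constructor
  · rintro ⟨⟨hx, hlt⟩, hne⟩
    have hlast : x (Fin.last n) < L := by have := hlt (Fin.last n); omega
    exact ⟨hx, fun i => (hx.monotone (Fin.le_last i)).trans_lt hlast⟩
  · rintro ⟨hx, hlt⟩
    exact ⟨⟨hx, fun i => (hlt i).trans (Nat.lt_succ_self L)⟩, (hlt _).ne⟩

theorem sum_strictTuples_filter_last_eq (n L : ℕ) (f : (Fin (n + 1) → ℕ) → ℂ) :
    ∑ x ∈ (strictTuples (n + 1) (L + 1)).filter (fun x => x (Fin.last n) = L), f x
      = ∑ y ∈ strictTuples n L, f (Fin.snoc y L) := by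
  have hinv : ∀ x ∈ (strictTuples (n + 1) (L + 1)).filter (fun x => x (Fin.last n) = L),
      Fin.snoc (Fin.init x) L = x := fun x hx => by
    rw [← (mem_filter.1 hx).2, Fin.snoc_init_self]
  refine sum_nbij' Fin.init (Fin.snoc · L) (fun x hx => ?_) (fun y hy => ?_) hinv
    (fun y _ => Fin.init_snoc _ _) (fun x hx => congrArg f (hinv x hx).symm)
  · simp only [mem_filter, mem_strictTuples] at hx ⊢
    obtain ⟨⟨hx, -⟩, hL⟩ := hx
    exact ⟨hx.comp Fin.strictMono_castSucc, fun i => hL ▸ hx (Fin.castSucc_lt_last i)⟩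
  · simp only [mem_filter, mem_strictTuples, Fin.strictMono_snoc] at hy ⊢
    refine ⟨⟨hy, fun i => ?_⟩, by simp⟩
    induction i using Fin.lastCases with
    | last => simp
    | cast i => simpa using (hy.2 i).trans (Nat.lt_succ_self L)

theorem Bstrict_succ_succ (n L : ℕ) (l : ℕ → ℂ) :
    Bstrict (n + 1) (L + 1) l = Bstrict (n + 1) L l + l (n + 1) ^ L * Bstrict n L l := by
  simp only [Bstrict_eq_sum_strictTuples]
  rw [← sum_filter_add_sum_filter_not _ (fun x => x (Fin.last n) = L), add_comm,
    strictTuples_filter_last_ne, sum_strictTuples_filter_last_eq, mul_sum]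
  congr 1
  refine sum_congr rfl fun y _ => ?_
  rw [Fin.prod_univ_castSucc, mul_comm]
  simp

theorem sum_strictTuples_filter_zero_ne (n L : ℕ) (f : (Fin (n + 1) → ℕ) → ℂ) :
    ∑ x ∈ (strictTuples (n + 1) (L + 1)).filter (fun x => x 0 ≠ 0), f x
      = ∑ y ∈ strictTuples (n + 1) L, f (fun i => y i + 1) := by
  have hpos : ∀ x ∈ (strictTuples (n + 1) (L + 1)).filter (fun x => x 0 ≠ 0), ∀ i, 0 < x i := by
    intro x hx i
    simp only [mem_filter, mem_strictTuples] at hx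
    exact (Nat.pos_of_ne_zero hx.2).trans_le (hx.1.1.monotone (Fin.zero_le i))
  have hinv : ∀ x ∈ (strictTuples (n + 1) (L + 1)).filter (fun x => x 0 ≠ 0),
      (fun i => x i - 1 + 1) = x := fun x hx => funext fun i => by have := hpos x hx i; omega
  refine sum_nbij' (fun x i => x i - 1) (fun y i => y i + 1) (fun x hx => ?_) (fun y hy => ?_)
    hinv (fun y _ => by simp) (fun x hx => congrArg f (hinv x hx).symm)
  · have hpos := hpos x hx
    simp only [mem_filter, mem_strictTuples] at hx ⊢
    exact ⟨fun i j hij => by dsimp only; have := hx.1.1 hij; have := hpos i; omega,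
      fun i => by have := hx.1.2 i; have := hpos i; omega⟩
  · simp only [mem_filter, mem_strictTuples] at hy ⊢
    exact ⟨⟨fun i j hij => by simpa using hy.1 hij, fun i => by simpa using hy.2 i⟩, by simp⟩

theorem sum_strictTuples_filter_zero_eq (n L : ℕ) (f : (Fin (n + 1) → ℕ) → ℂ) :
    ∑ x ∈ (strictTuples (n + 1) (L + 1)).filter (fun x => x 0 = 0), f x
      = ∑ y ∈ strictTuples n L, f (Fin.cons 0 fun i => y i + 1) := by
  have hpos : ∀ x ∈ (strictTuples (n + 1) (L + 1)).filter (fun x => x 0 = 0),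
      ∀ i : Fin n, 0 < x i.succ := by
    intro x hx i
    simp only [mem_filter, mem_strictTuples] at hx
    exact hx.2 ▸ hx.1.1 (Fin.succ_pos i)
  have hinv : ∀ x ∈ (strictTuples (n + 1) (L + 1)).filter (fun x => x 0 = 0),
      (Fin.cons 0 fun i => x i.succ - 1 + 1 : Fin (n + 1) → ℕ) = x := by
    intro x hx
    funext i
    induction i using Fin.cases with
    | zero => simp only [mem_filter] at hx; simp [hx.2]
    | succ i => have := hpos x hx i; simp only [Fin.cons_succ]; omega
  refine sum_nbij' (fun x i => x i.succ - 1) (fun y => Fin.cons 0 fun i => y i + 1)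
    (fun x hx => ?_) (fun y hy => ?_) hinv (fun y _ => by simp)
    (fun x hx => congrArg f (hinv x hx).symm)
  · have hpos := hpos x hx
    simp only [mem_filter, mem_strictTuples] at hx ⊢
    exact ⟨fun i j hij => by
        dsimp only; have := hx.1.1 (Fin.succ_lt_succ_iff.2 hij); have := hpos i; omega,
      fun i => by have := hx.1.2 i.succ; have := hpos i; omega⟩
  · simp only [mem_filter, mem_strictTuples, Fin.strictMono_cons] at hy ⊢
    refine ⟨⟨⟨fun i => Nat.succ_pos _, fun i j hij => by simpa using hy.1 hij⟩, fun i => ?_⟩, rfl⟩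
    induction i using Fin.cases with
    | zero => simp
    | succ i => simpa using hy.2 i

theorem Bstrict_succ_succ' (n L : ℕ) (l : ℕ → ℂ) :
    Bstrict (n + 1) (L + 1) l = (∏ k ∈ Icc 1 (n + 1), l k) * Bstrict (n + 1) L l
      + (∏ k ∈ Icc 2 (n + 1), l k) * Bstrict n L (fun k => l (k + 1)) := by
  simp only [Bstrict_eq_sum_strictTuples]
  rw [← sum_filter_add_sum_filter_not _ (fun x => x 0 = 0), add_comm,
    sum_strictTuples_filter_zero_ne, sum_strictTuples_filter_zero_eq, mul_sum, mul_sum,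
    ← Fin.prod_univ_add_one_eq_prod_Icc, ← prod_Icc_add_one, ← Fin.prod_univ_add_one_eq_prod_Icc]
  congr 1
  · refine sum_congr rfl fun y _ => ?_
    rw [← prod_mul_distrib]
    simp [pow_succ']
  · refine sum_congr rfl fun y _ => ?_
    rw [Fin.prod_univ_succ, ← prod_mul_distrib]
    simp [pow_succ']

def IntervalProdsNeOne (N : ℕ) (l : ℕ → ℂ) : Prop :=
  ∀ j k : ℕ, 1 ≤ j → j ≤ k → k ≤ N → ∏ o ∈ Icc j k, l o ≠ 1

theorem IntervalProdsNeOne.mono {M N : ℕ} {l : ℕ → ℂ} (h : IntervalProdsNeOne N l)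
    (hMN : M ≤ N) : IntervalProdsNeOne M l :=
  fun j k hj hjk hk => h j k hj hjk (hk.trans hMN)

theorem IntervalProdsNeOne.shift {n : ℕ} {l : ℕ → ℂ} (h : IntervalProdsNeOne (n + 1) l) :
    IntervalProdsNeOne n (fun k => l (k + 1)) := by
  intro j k hj hjk hk
  rw [prod_Icc_add_one]
  exact h (j + 1) (k + 1) (by omega) (by omega) (by omega)

noncomputable def closedFormTerm (N L : ℕ) (l : ℕ → ℂ) (j : ℕ) : ℂ :=
  ((-1 : ℂ) ^ j * (∏ k ∈ Icc (j + 1) N, l k) ^ L * ∏ k ∈ Icc 2 j, l k ^ (k - 1))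
    / ((∏ k ∈ Icc (j + 1) N, ((∏ o ∈ Icc (j + 1) k, l o) - 1))
        * ∏ k ∈ Icc 1 j, ((∏ o ∈ Icc k j, l o) - 1))

noncomputable def closedForm (N L : ℕ) (l : ℕ → ℂ) : ℂ :=
  ∑ j ∈ range (N + 1), closedFormTerm N L l j

theorem closedFormTerm_length_succ (N L : ℕ) (l : ℕ → ℂ) (j : ℕ) :
    closedFormTerm N (L + 1) l j = (∏ k ∈ Icc (j + 1) N, l k) * closedFormTerm N L l j := by
  unfold closedFormTerm
  ring

theorem closedFormTerm_succ_succ {n j : ℕ} (L : ℕ) (l : ℕ → ℂ) (hj : j ≤ n)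
    (hne : ∏ k ∈ Icc (j + 1) (n + 1), l k ≠ 1) :
    closedFormTerm (n + 1) (L + 1) l j
      = closedFormTerm (n + 1) L l j + l (n + 1) ^ L * closedFormTerm n L l j := by
  have hsplit : ∏ k ∈ Icc (j + 1) (n + 1), l k = (∏ k ∈ Icc (j + 1) n, l k) * l (n + 1) :=
    prod_Icc_succ_top (by omega) l
  rw [closedFormTerm_length_succ]
  unfold closedFormTerm
  rw [prod_Icc_succ_top (a := j + 1) (b := n) (f := fun k => (∏ o ∈ Icc (j + 1) k, l o) - 1)
    (by omega), mul_div_mul_sub_one hne, hsplit]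
  ring

theorem closedFormTerm_succ_succ' {n j : ℕ} (L : ℕ) (l : ℕ → ℂ) (hj : j ≤ n)
    (hne : ∏ k ∈ Icc 1 (j + 1), l k ≠ 1) :
    closedFormTerm (n + 1) (L + 1) l (j + 1)
      = (∏ k ∈ Icc 1 (n + 1), l k) * closedFormTerm (n + 1) L l (j + 1)
        + (∏ k ∈ Icc 2 (n + 1), l k) * closedFormTerm n L (fun k => l (k + 1)) j := by
  set P := ∏ k ∈ Icc (j + 1 + 1) (n + 1), l k
  set r := ∏ k ∈ Icc 1 (j + 1), l k
  set s := ∏ k ∈ Icc 2 (j + 1), l k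
  set W' := ∏ k ∈ Icc 2 j, l (k + 1) ^ (k - 1)
  set D := ∏ k ∈ Icc (j + 1 + 1) (n + 1), ((∏ o ∈ Icc (j + 1 + 1) k, l o) - 1)
  set E := ∏ k ∈ Icc 2 (j + 1), ((∏ o ∈ Icc k (j + 1), l o) - 1)
  have hQ : ∏ k ∈ Icc 1 (n + 1), l k = r * P :=
    (prod_Icc_mul_prod_Icc l (by omega) (by omega)).symm
  have hQ' : ∏ k ∈ Icc 2 (n + 1), l k = s * P :=
    (prod_Icc_mul_prod_Icc l (by omega) (by omega)).symm
  have hT : closedFormTerm (n + 1) L l (j + 1)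
      = (-1) ^ (j + 1) * P ^ L * (s * W') / (D * ((r - 1) * E)) := by
    unfold closedFormTerm
    rw [prod_Icc_pow_sub_one_succ, ← insert_Icc_add_one_left_eq_Icc (by omega : 1 ≤ j + 1),
      prod_insert (by simp)]
    rfl
  have hT' : closedFormTerm n L (fun k => l (k + 1)) j = (-1) ^ j * P ^ L * W' / (D * E) := by
    unfold closedFormTerm
    simp only [prod_Icc_add_one l, prod_Icc_add_one (fun k => ∏ o ∈ Icc (j + 1 + 1) k, l o - 1),
      prod_Icc_add_one (fun k => ∏ o ∈ Icc k (j + 1), l o - 1)]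
    rfl
  rw [closedFormTerm_length_succ, hQ, hQ', hT, hT', ← mul_assoc D, mul_right_comm r, mul_assoc,
    mul_div_mul_sub_one hne]
  ring

theorem closedForm_zero (L : ℕ) (l : ℕ → ℂ) : closedForm 0 L l = 1 := by
  simp [closedForm, closedFormTerm]

theorem closedForm_succ_succ {n : ℕ} {l : ℕ → ℂ} (h : IntervalProdsNeOne (n + 1) l) (L : ℕ) :
    closedForm (n + 1) (L + 1) l = closedForm (n + 1) L l + l (n + 1) ^ L * closedForm n L l := by
  have htop : closedFormTerm (n + 1) (L + 1) l (n + 1) = closedFormTerm (n + 1) L l (n + 1) := by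
    rw [closedFormTerm_length_succ, Icc_eq_empty (by omega), prod_empty, one_mul]
  unfold closedForm
  rw [sum_range_succ, sum_range_succ _ (n + 1), htop, mul_sum,
    sum_congr rfl fun j hj => closedFormTerm_succ_succ L l (mem_range_succ_iff.1 hj)
      (h _ _ (by omega) (by simp at hj; omega) le_rfl), sum_add_distrib]
  ring

theorem closedForm_succ_succ' {n : ℕ} {l : ℕ → ℂ} (h : IntervalProdsNeOne (n + 1) l) (L : ℕ) :
    closedForm (n + 1) (L + 1) l = (∏ k ∈ Icc 1 (n + 1), l k) * closedForm (n + 1) L l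
      + (∏ k ∈ Icc 2 (n + 1), l k) * closedForm n L (fun k => l (k + 1)) := by
  unfold closedForm
  rw [sum_range_succ', sum_range_succ' _ (n + 1), closedFormTerm_length_succ _ _ _ 0,
    sum_congr rfl fun j hj => closedFormTerm_succ_succ' L l (mem_range_succ_iff.1 hj)
      (h 1 (j + 1) le_rfl (by omega) (by simp at hj; omega)), sum_add_distrib, mul_add, mul_sum,
    mul_sum]
  ring

theorem Bstrict_eq_closedForm {N : ℕ} {l : ℕ → ℂ} (h : IntervalProdsNeOne N l) (L : ℕ) :
    Bstrict N L l = closedForm N L l := by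
  induction N generalizing l L with
  | zero => rw [Bstrict_zero, closedForm_zero]
  | succ n ih =>
    set Q := ∏ k ∈ Icc 1 (n + 1), l k
    have hQ : Q ≠ 1 := h 1 (n + 1) le_rfl (by omega) le_rfl
    have hlast : Bstrict (n + 1) (L + 1) l - closedForm (n + 1) (L + 1) l
        = Bstrict (n + 1) L l - closedForm (n + 1) L l := by
      rw [Bstrict_succ_succ, closedForm_succ_succ h, ih (h.mono n.le_succ)]
      ring
    have hfirst : Bstrict (n + 1) (L + 1) l - closedForm (n + 1) (L + 1) l
        = Q * (Bstrict (n + 1) L l - closedForm (n + 1) L l) := by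
      rw [Bstrict_succ_succ', closedForm_succ_succ' h, ih h.shift]
      ring
    have hzero : (Q - 1) * (Bstrict (n + 1) L l - closedForm (n + 1) L l) = 0 := by
      linear_combination hlast - hfirst
    exact sub_eq_zero.1 ((mul_eq_zero.1 hzero).resolve_left (sub_ne_zero.2 hQ))

theorem strict_closed_form_general (N : ℕ) (l : ℕ → ℂ)
    (hzf : ∀ j k : ℕ, 1 ≤ j → j ≤ k → k ≤ N → ∏ o ∈ Finset.Icc j k, l o ≠ 1)
    (L : ℕ) :
    Bstrict N L l =
      ∑ j ∈ Finset.range (N + 1),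
        ((-1 : ℂ) ^ j * (∏ k ∈ Finset.Icc (j + 1) N, l k) ^ L
            * ∏ k ∈ Finset.Icc 2 j, l k ^ (k - 1))
          / ((∏ k ∈ Finset.Icc (j + 1) N, ((∏ o ∈ Finset.Icc (j + 1) k, l o) - 1))
              * ∏ k ∈ Finset.Icc 1 j, ((∏ o ∈ Finset.Icc k j, l o) - 1)) :=
  Bstrict_eq_closedForm hzf L

theorem strict_closed_form (N : ℕ) (l : ℕ → ℂ)
    (hzf : ∀ j k : ℕ, 1 ≤ j → j ≤ k → k ≤ N → ∏ o ∈ Finset.Icc j k, l o ≠ 1)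
    (L : ℕ) (hL : N ≤ L) :
    Bstrict N L l =
      ∑ j ∈ Finset.range (N + 1),
        ((-1 : ℂ) ^ j * (∏ k ∈ Finset.Icc (j + 1) N, l k) ^ L
            * ∏ k ∈ Finset.Icc 2 j, l k ^ (k - 1))
          / ((∏ k ∈ Finset.Icc (j + 1) N, ((∏ o ∈ Finset.Icc (j + 1) k, l o) - 1))
              * ∏ k ∈ Finset.Icc 1 j, ((∏ o ∈ Finset.Icc k j, l o) - 1)) :=
  strict_closed_form_general N l hzf L
end

section
/- Let $f(u) = (u - i)/u$ and $l(u) = (u - i/2)/(u + i/2)$, and define $F(u) = \frac{1}{2}\left[\frac{f(-2u)}{1 - l(-u)^2} + \frac{f(2u)}{1 - l(u)^2}\right]$. Then $u(\lambda) := \frac{F(\lambda)^2}{f(2\lambda) f(-2\lambda)} = \frac{\lambda^2 + 1/4}{16 \lambda^2}$ for all complex $\lambda$ where the expressions are defined. -/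
/-!
Writing `l u = (u - i/2)/(u + i/2)` gives `1 - l u ^ 2 = 2 i u / (u + i/2) ^ 2`, so the two
summands of `F` are `∓ (2u ± i)(2u ∓ i)² / (16 i u²)`. Their sum collapses to
`F u = (4u² + 1) / (16 u²)`, while `f (2u) f (-2u) = (4u² + 1) / (4u²)`; one factor
`4u² + 1` cancels in the quotient.
-/

open Complex

theorem one_sub_div_sq_eq {K : Type*} [Field K] {z a : K} (h : z + a ≠ 0) :
    1 - ((z - a) / (z + a)) ^ 2 = 4 * a * z / (z + a) ^ 2 := by
  field_simp
  ring

theorem neel_F_eq {f l F : ℂ → ℂ} (hf : ∀ z, f z = (z - I) / z)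
    (hl : ∀ z, l z = (z - I / 2) / (z + I / 2))
    (hF : ∀ z, F z = (1 / 2) * (f (-2 * z) / (1 - l (-z) ^ 2)
        + f (2 * z) / (1 - l z ^ 2)))
    {z : ℂ} (h0 : z ≠ 0) (h1 : z ≠ I / 2) (h2 : z ≠ -(I / 2)) :
    F z = (4 * z ^ 2 + 1) / (16 * z ^ 2) := by
  have hp : z + I / 2 ≠ 0 := fun h => h2 (by linear_combination h)
  have hm : -z + I / 2 ≠ 0 := fun h => h1 (by linear_combination -h)
  rw [hF, hf, hf, hl, hl, one_sub_div_sq_eq hp, one_sub_div_sq_eq hm]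
  field_simp
  linear_combination -32 * I * I_sq

theorem neel_f_mul_f_neg {f : ℂ → ℂ} (hf : ∀ z, f z = (z - I) / z) {z : ℂ} (h0 : z ≠ 0) :
    f (2 * z) * f (-2 * z) = (4 * z ^ 2 + 1) / (4 * z ^ 2) := by
  rw [hf, hf]
  field_simp
  linear_combination -4 * I_sq

theorem SL2R_Neel_overlap_function_general (lam : ℂ) (h0 : lam ≠ 0)
    (h1 : lam ≠ I / 2) (h2 : lam ≠ -(I / 2))
    (f : ℂ → ℂ) (hf : ∀ z, f z = (z - I) / z)
    (l : ℂ → ℂ) (hl : ∀ z, l z = (z - I / 2) / (z + I / 2))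
    (F : ℂ → ℂ)
    (hF : ∀ z, F z = (1 / 2) * (f (-2 * z) / (1 - l (-z) ^ 2)
        + f (2 * z) / (1 - l z ^ 2))) :
    F lam ^ 2 / (f (2 * lam) * f (-2 * lam)) =
      (lam ^ 2 + 1 / 4) / (16 * lam ^ 2) := by
  have hq : 4 * lam ^ 2 + 1 ≠ 0 := fun h =>
    mul_ne_zero (sub_ne_zero.2 h1) (sub_ne_zero.2 h2)
      (by linear_combination h / 4 - I_sq / 4)
  rw [neel_F_eq hf hl hF h0 h1 h2, neel_f_mul_f_neg hf h0]
  field_simp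
  ring

theorem SL2R_Neel_overlap_function (lam : ℂ) (h0 : lam ≠ 0)
    (h1 : lam ≠ I / 2) (h2 : lam ≠ -(I / 2))
    (f : ℂ → ℂ) (hf : ∀ z, f z = (z - I) / z)
    (l : ℂ → ℂ) (hl : ∀ z, l z = (z - I / 2) / (z + I / 2))
    (F : ℂ → ℂ)
    (hF : ∀ z, F z = (1 / 2) * (f (-2 * z) / (1 - l (-z) ^ 2)
        + f (2 * z) / (1 - l z ^ 2)))
    (hd1 : 1 - l (-lam) ^ 2 ≠ 0) (hd2 : 1 - l lam ^ 2 ≠ 0)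
    (hd3 : f (2 * lam) * f (-2 * lam) ≠ 0) :
    F lam ^ 2 / (f (2 * lam) * f (-2 * lam)) =
      (lam ^ 2 + 1 / 4) / (16 * lam ^ 2) :=
  SL2R_Neel_overlap_function_general lam h0 h1 h2 f hf l hl F hF
end

section
/- Suppose $\tilde{D}: (\mathbb{R}^{N})^{\text{sym}} \times \mathbb{R}^N \to \mathbb{R}$, $(\boldsymbol{\lambda}, \boldsymbol{m}) \mapsto \tilde{D}(\boldsymbol{\lambda},\boldsymbol{m})$, is symmetric under simultaneous permutations of $(\lambda_j, m_j)$, is a polynomial of degree at most $1$ in each $m_j$, vanishes when all $m_j = 0$, and its coefficient of $m_j$ equals $\tilde{D}$ of the remaining $N-1$ pairs with each remaining $m_k$ replaced by $m_k + \varphi^+(\lambda_k, \lambda_j)$, where $\varphi^+(\lambda,\mu) = \varphi(\lambda - \mu) + \varphi(\lambda + \mu)$ for a given even-in-argument-symmetric function $\varphi$. Then $\tilde{D} = \det \tilde{G}$ where $\tilde{G}_{jk} = \delta_{jk}\left[m_j + \sum_{l=1}^N \varphi^+(\lambda_j, \lambda_l)\right] - \varphi^+(\lambda_j, \lambda_k)$.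 -/
/-!
Both sides are affine in each `m_j`, and the determinant satisfies the same recursion for the
coefficient of `m_j`: expanding `det G̃` along row `j` isolates `m_j` times the principal minor,
which is again a Gaudin matrix for the remaining pairs with `m_k` shifted by `φ⁺(λ_k, λ_j)`.
By induction on `N` the difference `D - det G̃` is therefore independent of every `m_j`, so it
equals its value at `m = 0`. There both sides vanish: `D` by hypothesis, and `det G̃` because
every row of `G̃` sums to zero.
-/

open Finset Matrix Function

section UpdateInvariant

variable {ι α β : Type*} [Fintype ι] [DecidableEq ι] [Zero α]

theorem apply_eq_apply_zero_of_forall_update {f : (ι → α) → β}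
    (h : ∀ m j t, f (update m j t) = f (update m j 0)) (m : ι → α) : f m = f 0 := by
  have h_piecewise : ∀ s : Finset ι, f m = f (s.piecewise 0 m) := by
    intro s
    induction s using Finset.induction_on with
    | empty => rw [piecewise_empty]
    | insert j s _ ih =>
      rw [piecewise_insert, ih, Pi.zero_apply, ← h, update_eq_self]
  rw [h_piecewise univ, piecewise_univ]

end UpdateInvariant

namespace Matrix

variable {R : Type*} [CommRing R]

theorem det_updateRow_single_self {n : ℕ} (A : Matrix (Fin (n + 1)) (Fin (n + 1)) R)
    (j : Fin (n + 1)) :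
    (A.updateRow j (Pi.single j 1)).det = (A.submatrix j.succAbove j.succAbove).det := by
  rw [← adjugate_apply, adjugate_fin_succ_eq_det_submatrix, (Even.add_self _).neg_one_pow, one_mul]

theorem det_add_single_self {n : ℕ} (A : Matrix (Fin (n + 1)) (Fin (n + 1)) R)
    (j : Fin (n + 1)) (t : R) :
    (A + single j j t).det = A.det + t * (A.submatrix j.succAbove j.succAbove).det := by
  have hrow : A + single j j t = A.updateRow j (A j + t • Pi.single j 1) := by
    ext i k
    by_cases hij : i = j
    · subst hij
      by_cases hik : i = k
      · subst hik; simp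
      · simp [hik]
    · simp [hij, Ne.symm hij]
  rw [hrow, det_updateRow_add, updateRow_eq_self, det_updateRow_smul, det_updateRow_single_self]

section Gaudin

variable {ι : Type*} [Fintype ι] [DecidableEq ι]

def gaudin (K : Matrix ι ι R) (m : ι → R) : Matrix ι ι R :=
  diagonal (fun j => m j + ∑ l, K j l) - K

theorem gaudin_update (K : Matrix ι ι R) (m : ι → R) (j : ι) (t : R) :
    gaudin K (update m j t) = gaudin K (update m j 0) + single j j t := by
  ext i k
  by_cases hij : i = j
  · subst hij
    by_cases hik : i = k
    · subst hik; simp [gaudin]; ring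
    · simp [gaudin, hik]
  · simp [gaudin, hij, diagonal_apply, Ne.symm hij]

theorem det_gaudin_zero [Nonempty ι] (K : Matrix ι ι R) : (gaudin K 0).det = 0 := by
  have hrows : gaudin K 0 *ᵥ 1 = 0 := by
    ext j
    simp [gaudin, mulVec, dotProduct, sum_sub_distrib, diagonal_apply]
  exact det_eq_zero_of_mulVec_eq_zero_of_mem_nonZeroDivisors hrows
    (i := Classical.arbitrary ι) (one_mem _)

end Gaudin

theorem submatrix_gaudin_update_zero {n : ℕ} (K : Matrix (Fin (n + 1)) (Fin (n + 1)) R)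
    (m : Fin (n + 1) → R) (j : Fin (n + 1)) :
    (gaudin K (update m j 0)).submatrix j.succAbove j.succAbove
      = gaudin (K.submatrix j.succAbove j.succAbove)
          (fun k => m (j.succAbove k) + K (j.succAbove k) j) := by
  ext k l
  simp [gaudin, diagonal_apply, Fin.sum_univ_succAbove _ j, Fin.succAbove_right_injective.eq_iff,
    add_assoc]

theorem det_gaudin_update {n : ℕ} (K : Matrix (Fin (n + 1)) (Fin (n + 1)) R)
    (m : Fin (n + 1) → R) (j : Fin (n + 1)) (t : R) :
    (gaudin K (update m j t)).det = (gaudin K (update m j 0)).det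
      + t * (gaudin (K.submatrix j.succAbove j.succAbove)
          (fun k => m (j.succAbove k) + K (j.succAbove k) j)).det := by
  rw [gaudin_update, det_add_single_self, submatrix_gaudin_update_zero]

end Matrix

/-- `gaudin (phiPlusKernel φ λ) m` is the matrix `G̃` of the statement. -/
def phiPlusKernel {ι : Type*} (φ : ℝ → ℝ) (lam : ι → ℝ) : Matrix ι ι ℝ :=
  of fun j k => φ (lam j - lam k) + φ (lam j + lam k)

theorem phiPlusKernel_comp {ι κ : Type*} (φ : ℝ → ℝ) (lam : ι → ℝ) (e : κ → ι) :
    phiPlusKernel φ (lam ∘ e) = (phiPlusKernel φ lam).submatrix e e :=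
  rfl

theorem korepin_uniqueness_general (φ : ℝ → ℝ)
    (D : (n : ℕ) → (Fin n → ℝ) → (Fin n → ℝ) → ℝ)
    (hbase : ∀ (lam m : Fin 0 → ℝ), D 0 lam m = 1)
    (hzero : ∀ (n : ℕ) (lam : Fin (n + 1) → ℝ), D (n + 1) lam 0 = 0)
    (hlin : ∀ (n : ℕ) (lam m : Fin (n + 1) → ℝ) (j : Fin (n + 1)) (t : ℝ),
      D (n + 1) lam (Function.update m j t)
        = D (n + 1) lam (Function.update m j 0)
          + t * D n (lam ∘ j.succAbove)
              (fun k => m (j.succAbove k)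
                + (φ (lam (j.succAbove k) - lam j)
                  + φ (lam (j.succAbove k) + lam j)))) :
    ∀ (n : ℕ) (lam : Fin n → ℝ), Function.Injective lam →
      ∀ m : Fin n → ℝ,
        D n lam m =
          Matrix.det (Matrix.of fun j k : Fin n =>
            (if j = k then
                m j + ∑ l : Fin n, (φ (lam j - lam l) + φ (lam j + lam l))
              else 0)
            - (φ (lam j - lam k) + φ (lam j + lam k))) := by
  suffices h : ∀ n lam m, D n lam m = (gaudin (phiPlusKernel φ lam) m).det from
    fun n lam _ m => h n lam m
  intro n
  induction n with
  | zero => intro lam m; rw [hbase, det_fin_zero]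
  | succ n ih =>
    intro lam m
    let E m := D (n + 1) lam m - (gaudin (phiPlusKernel φ lam) m).det
    have hE : ∀ m j t, E (update m j t) = E (update m j 0) := by
      intro m j t
      simp only [E]
      rw [hlin n lam m j t, det_gaudin_update, ← phiPlusKernel_comp, ih]
      simp only [phiPlusKernel, of_apply]
      ring
    have hE0 : E 0 = 0 := by simp only [E, hzero, det_gaudin_zero, sub_zero]
    exact sub_eq_zero.mp ((apply_eq_apply_zero_of_forall_update hE m).trans hE0)

/-- Korepin-style uniqueness theorem for the Gaudin-type determinant.
`D n lam m` is a family of functions of `n` pairs `(λ_j, m_j)`; the four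
characterizing properties (permutation symmetry, linearity in each `m_j`,
vanishing at `m = 0`, and the recursion for the coefficient of `m_j` with
the modification rule `m_k ↦ m_k + φ⁺(λ_k, λ_j)`) force `D` to equal the
Gaudin-type determinant `det G̃`. -/
theorem korepin_uniqueness (φ : ℝ → ℝ) (hφ : ∀ x, φ (-x) = φ x)
    (D : (n : ℕ) → (Fin n → ℝ) → (Fin n → ℝ) → ℝ)
    (hbase : ∀ (lam m : Fin 0 → ℝ), D 0 lam m = 1)
    (hsym : ∀ (n : ℕ) (σ : Equiv.Perm (Fin n)) (lam m : Fin n → ℝ),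
      D n (lam ∘ σ) (m ∘ σ) = D n lam m)
    (hzero : ∀ (n : ℕ) (lam : Fin (n + 1) → ℝ), D (n + 1) lam 0 = 0)
    (hlin : ∀ (n : ℕ) (lam m : Fin (n + 1) → ℝ) (j : Fin (n + 1)) (t : ℝ),
      D (n + 1) lam (Function.update m j t)
        = D (n + 1) lam (Function.update m j 0)
          + t * D n (lam ∘ j.succAbove)
              (fun k => m (j.succAbove k)
                + (φ (lam (j.succAbove k) - lam j)
                  + φ (lam (j.succAbove k) + lam j)))) :
    ∀ (n : ℕ) (lam : Fin n → ℝ), Function.Injective lam →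
      ∀ m : Fin n → ℝ,
        D n lam m =
          Matrix.det (Matrix.of fun j k : Fin n =>
            (if j = k then
                m j + ∑ l : Fin n, (φ (lam j - lam l) + φ (lam j + lam l))
              else 0)
            - (φ (lam j - lam k) + φ (lam j + lam k))) :=
  korepin_uniqueness_general φ D hbase hzero hlin
end

section
/- Let $G$ be the $N \times N$ Gaudin matrix $G_{jk} = \delta_{jk}[p'(\lambda_j) L + \sum_{l=1}^N \varphi(\lambda_j - \lambda_l)] - \varphi(\lambda_j - \lambda_k)$ for an even function $\varphi$ and a rapidity set with the pair structure $\{\lambda_1^+, -\lambda_1^+, \dots, \lambda_{N/2}^+, -\lambda_{N/2}^+\}$ ($N$ even), where $p'$ is even. Then $\det G = \det G^+ \det G^-$, where $G^{\pm}$ are the $(N/2) \times (N/2)$ matrices $G^{\pm}_{jk} = \delta_{jk}[p'(\lambda_j^+) L + \sum_{l=1}^{N/2} \varphi^+(\lambda_j^+, \lambda_l^+)] - \varphi^{\pm}(\lambda_j^+, \lambda_k^+)$ with $\varphi^{\pm}(\lambda,\mu) = \varphi(\lambda - \mu) \pm \varphi(\lambda + \mu)$. -/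
/-!
Order the rapidities as `λ⁺` followed by `-λ⁺`. Since `φ` and `p'` are even, the Gaudin matrix
becomes the block matrix `[[X, Y], [Y, X]]` with `X = diag(D) - (φ(λⱼ - λₖ))` and
`Y = -(φ(λⱼ + λₖ))`, where `D` collects the diagonal terms. Conjugating by `[[1, 0], [1, 1]]`
makes it block triangular with diagonal blocks `X + Y = G⁺` and `X - Y = G⁻`.
-/

open Finset

/-- The rapidity set with pair structure: `μ_{2j} = λ_j⁺`, `μ_{2j+1} = -λ_j⁺`
(0-based indexing of the `2n` rapidities). -/
def pairRapidities (n : ℕ) (lam : Fin n → ℝ) : Fin (2 * n) → ℝ :=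
  fun i =>
    if (i : ℕ) % 2 = 0 then lam ⟨(i : ℕ) / 2, by have := i.isLt; omega⟩
    else -lam ⟨(i : ℕ) / 2, by have := i.isLt; omega⟩

def finSumFinInterleave (n : ℕ) : Fin n ⊕ Fin n ≃ Fin (2 * n) where
  toFun := Sum.elim (fun j => ⟨2 * j, by omega⟩) (fun j => ⟨2 * j + 1, by omega⟩)
  invFun i := if (i : ℕ) % 2 = 0 then .inl ⟨i / 2, by omega⟩ else .inr ⟨i / 2, by omega⟩
  left_inv := by rintro (j | j) <;> simp [Nat.mul_add_div]
  right_inv i := by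
    by_cases h : (i : ℕ) % 2 = 0 <;> simp [h, Fin.ext_iff] <;> omega

@[simp]
lemma pairRapidities_interleave_inl (n : ℕ) (lam : Fin n → ℝ) (j : Fin n) :
    pairRapidities n lam (finSumFinInterleave n (.inl j)) = lam j := by
  simp [pairRapidities, finSumFinInterleave]

@[simp]
lemma pairRapidities_interleave_inr (n : ℕ) (lam : Fin n → ℝ) (j : Fin n) :
    pairRapidities n lam (finSumFinInterleave n (.inr j)) = -lam j := by
  simp [pairRapidities, finSumFinInterleave, Nat.add_mod, Nat.mul_add_div]

section PairSums

variable {M : Type*} [AddCommMonoid M] (n : ℕ) (lam : Fin n → ℝ)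

lemma sum_pairRapidities (f : ℝ → M) :
    ∑ l, f (pairRapidities n lam l) = ∑ l, (f (lam l) + f (-lam l)) := by
  rw [← (finSumFinInterleave n).sum_comp, Fintype.sum_sum_type, ← sum_add_distrib]
  simp

lemma sum_neg_pairRapidities (f : ℝ → M) :
    ∑ l, f (-pairRapidities n lam l) = ∑ l, f (pairRapidities n lam l) := by
  rw [sum_pairRapidities n lam (fun y => f (-y)), sum_pairRapidities]
  simp only [neg_neg, add_comm]

lemma sum_sub_pairRapidities (f : ℝ → M) (x : ℝ) :
    ∑ l, f (x - pairRapidities n lam l) = ∑ l, (f (x - lam l) + f (x + lam l)) := by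
  simpa only [sub_neg_eq_add] using sum_pairRapidities n lam (fun y => f (x - y))

lemma sum_add_pairRapidities (f : ℝ → M) (x : ℝ) :
    ∑ l, f (x + pairRapidities n lam l) = ∑ l, f (x - pairRapidities n lam l) := by
  simpa only [sub_neg_eq_add] using sum_neg_pairRapidities n lam (fun y => f (x - y))

end PairSums

theorem Matrix.det_fromBlocks_self_swap {m R : Type*} [Fintype m] [DecidableEq m] [CommRing R]
    (A B : Matrix m m R) :
    (fromBlocks A B B A).det = (A + B).det * (A - B).det := by
  have h : fromBlocks A B B A =
      fromBlocks 1 0 1 1 * fromBlocks (A + B) B 0 (A - B) * fromBlocks 1 0 (-1) 1 := by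
    simp [fromBlocks_multiply]
  rw [h, det_mul, det_mul, det_fromBlocks_zero₂₁, det_fromBlocks_zero₁₂, det_fromBlocks_zero₁₂]
  simp

def gaudinMatrix {ι : Type*} [Fintype ι] [DecidableEq ι] (p' φ : ℝ → ℝ) (L : ℝ) (μ : ι → ℝ) :
    Matrix ι ι ℝ :=
  Matrix.of fun j k =>
    (if j = k then p' (μ j) * L + ∑ l, φ (μ j - μ l) else 0) - φ (μ j - μ k)

lemma gaudinMatrix_pairRapidities_submatrix (n : ℕ) (φ p' : ℝ → ℝ)
    (hφ : ∀ x, φ (-x) = φ x) (hp : ∀ x, p' (-x) = p' x) (L : ℝ) (lam : Fin n → ℝ) :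
    (gaudinMatrix p' φ L (pairRapidities n lam)).submatrix
        (finSumFinInterleave n) (finSumFinInterleave n) =
      Matrix.fromBlocks
        (Matrix.diagonal (fun j => p' (lam j) * L + ∑ l, (φ (lam j - lam l) + φ (lam j + lam l)))
          - Matrix.of fun j k => φ (lam j - lam k))
        (-Matrix.of fun j k => φ (lam j + lam k))
        (-Matrix.of fun j k => φ (lam j + lam k))
        (Matrix.diagonal (fun j => p' (lam j) * L + ∑ l, (φ (lam j - lam l) + φ (lam j + lam l)))
          - Matrix.of fun j k => φ (lam j - lam k)) := by
  have hφ_add : ∀ x y, φ (-x - y) = φ (x + y) := fun x y => by rw [← neg_add', hφ]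
  have hφ_sub : ∀ x y, φ (-x + y) = φ (x - y) := fun x y => by
    rw [← hφ (x - y), neg_sub, neg_add_eq_sub]
  ext (j | j) (k | k) <;>
    simp only [gaudinMatrix, Matrix.submatrix_apply, Matrix.of_apply, Matrix.fromBlocks_apply₁₁,
      Matrix.fromBlocks_apply₁₂, Matrix.fromBlocks_apply₂₁, Matrix.fromBlocks_apply₂₂,
      Matrix.sub_apply, Matrix.neg_apply, Matrix.diagonal_apply, pairRapidities_interleave_inl,
      pairRapidities_interleave_inr, EmbeddingLike.apply_eq_iff_eq, Sum.inl.injEq,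
      Sum.inr.injEq, reduceCtorEq, if_false] <;>
    simp only [hφ_add, hφ_sub, hp, sum_add_pairRapidities, sum_sub_pairRapidities,
      sub_neg_eq_add, zero_sub]

/-- Factorization of the Gaudin determinant for parity-symmetric rapidity
sets: `det G = det G⁺ · det G⁻`. -/
theorem gaudin_factorization (n : ℕ) (φ p' : ℝ → ℝ)
    (hφ : ∀ x, φ (-x) = φ x) (hp : ∀ x, p' (-x) = p' x)
    (L : ℝ) (lam : Fin n → ℝ) :
    Matrix.det (Matrix.of fun j k : Fin (2 * n) =>
        (if j = k then
            p' (pairRapidities n lam j) * L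
              + ∑ l : Fin (2 * n),
                  φ (pairRapidities n lam j - pairRapidities n lam l)
          else 0)
        - φ (pairRapidities n lam j - pairRapidities n lam k)) =
      Matrix.det (Matrix.of fun j k : Fin n =>
        (if j = k then
            p' (lam j) * L
              + ∑ l : Fin n, (φ (lam j - lam l) + φ (lam j + lam l))
          else 0)
        - (φ (lam j - lam k) + φ (lam j + lam k)))
      * Matrix.det (Matrix.of fun j k : Fin n =>
        (if j = k then
            p' (lam j) * L
              + ∑ l : Fin n, (φ (lam j - lam l) + φ (lam j + lam l))
          else 0)
        - (φ (lam j - lam k) - φ (lam j + lam k))) := by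
  change (gaudinMatrix p' φ L (pairRapidities n lam)).det = _
  rw [← Matrix.det_submatrix_equiv_self (finSumFinInterleave n),
    gaudinMatrix_pairRapidities_submatrix n φ p' hφ hp, Matrix.det_fromBlocks_self_swap]
  congr 2 <;> ext j k <;> by_cases hjk : j = k <;> simp [hjk] <;> ring
end

section
/- Define the $2\times 2$ matrices $A_i, \tilde{A}_i$ ($i = 1,\dots,4$) over rational functions in $u$ with parameter $\alpha$: $A_1 = \begin{pmatrix} (u+i/2)^2 & i\alpha(u+i/2) \\ 0 & (u-i/2)^2 \end{pmatrix}$, $\tilde{A}_1 = \begin{pmatrix} (u+i/2)^2 & i\alpha(u-i/2) \\ 0 & (u-i/2)^2 \end{pmatrix}$, $A_2 = \begin{pmatrix} 0 & 0 \\ i(u+i/2) & -\alpha \end{pmatrix}$, $\tilde{A}_2 = \begin{pmatrix} -\alpha & 0 \\ i(u-i/2) & 0 \end{pmatrix}$, $A_3 = \begin{pmatrix} i\alpha(u+i/2) & i\alpha^2(u+i/2) \\ i(u-i/2) & -i\alpha(u-i/2) \end{pmatrix}$, $\tilde{A}_3 = \begin{pmatrix} i\alpha(u+i/2) & i\alpha^2(u-i/2)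 \\ i(u+i/2) & -i\alpha(u-i/2) \end{pmatrix}$, $A_4 = \begin{pmatrix} 0 & 0 \\ -\alpha & -\alpha^2 \end{pmatrix}$, $\tilde{A}_4 = \begin{pmatrix} -\alpha^2 & 0 \\ \alpha & 0 \end{pmatrix}$. Then with $\tilde{K}(u) = \begin{pmatrix} 2u & (u+i/2)\alpha \\ (u-i/2)\alpha & 0 \end{pmatrix}$, one has $\tilde{K}(u) A_i \tilde{K}(u)^{-1} = \tilde{A}_i^{\mathrm{T}}$ for each $i = 1, 2, 3, 4$ (equivalently $\tilde{K}(u) A_i = \tilde{A}_i^{\mathrm{T}} \tilde{K}(u)$), whenever $\det \tilde{K}(u) \neq 0$. -/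
/-!
With `p = u + i/2` and `m = u - i/2` one has `K̃ = !![p + m, p α; m α, 0]`, and each relation
`K̃ Aᵢ = Ãᵢᵀ K̃` is a polynomial identity in `p, m, α, i` modulo `p - m = i` and `i² = -1`
(for `A₃` and `A₄` it holds outright). As `det K̃ = -p m α² ≠ 0`, the relations may be
conjugated by `K̃`.
-/

open Complex Matrix

theorem Matrix.transpose_fin_two_of {α : Type*} (a b c d : α) :
    (!![a, b; c, d])ᵀ = !![a, c; b, d] := by
  ext i j
  fin_cases i <;> fin_cases j <;> rfl

theorem Matrix.of_fin_two_eq_iff {α : Type*} (a b c d a' b' c' d' : α) :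
    !![a, b; c, d] = !![a', b'; c', d'] ↔ a = a' ∧ b = b' ∧ c = c' ∧ d = d' := by
  simp only [EmbeddingLike.apply_eq_iff_eq, vecCons_inj, and_true, and_assoc]

theorem Matrix.mul_mul_nonsing_inv_of_mul_eq {n R : Type*} [Fintype n] [DecidableEq n]
    [CommRing R] {K A B : Matrix n n R} (hK : IsUnit K.det) (h : K * A = B * K) :
    K * A * K⁻¹ = B := by
  rw [h, mul_nonsing_inv_cancel_right _ _ hK]

section KTilde

variable {R : Type*} [CommRing R] {ι : R} (p m α : R)

def kTilde : Matrix (Fin 2) (Fin 2) R := !![p + m, p * α; m * α, 0]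

theorem det_kTilde : (kTilde p m α).det = -(p * m * α ^ 2) := by
  rw [kTilde, det_fin_two_of]
  ring

theorem kTilde_mul_A₃ :
    kTilde p m α * !![ι * α * p, ι * α ^ 2 * p; ι * m, -(ι * α * m)]
      = (!![ι * α * p, ι * α ^ 2 * m; ι * p, -(ι * α * m)])ᵀ * kTilde p m α := by
  rw [kTilde, transpose_fin_two_of, mul_fin_two, mul_fin_two, of_fin_two_eq_iff]
  refine ⟨?_, ?_, ?_, ?_⟩ <;> ring

theorem kTilde_mul_A₄ :
    kTilde p m α * !![0, 0; -α, -α ^ 2] = (!![-α ^ 2, 0; α, 0])ᵀ * kTilde p m α := by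
  rw [kTilde, transpose_fin_two_of, mul_fin_two, mul_fin_two, of_fin_two_eq_iff]
  refine ⟨?_, ?_, ?_, ?_⟩ <;> ring

variable {p m}

theorem kTilde_mul_A₁ (h : p - m = ι) :
    kTilde p m α * !![p ^ 2, ι * α * p; 0, m ^ 2]
      = (!![p ^ 2, ι * α * m; 0, m ^ 2])ᵀ * kTilde p m α := by
  subst h
  rw [kTilde, transpose_fin_two_of, mul_fin_two, mul_fin_two, of_fin_two_eq_iff]
  refine ⟨?_, ?_, ?_, ?_⟩ <;> ring

theorem kTilde_mul_A₂ (hι : ι ^ 2 = -1) (h : p - m = ι) :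
    kTilde p m α * !![0, 0; ι * p, -α] = (!![-α, 0; ι * m, 0])ᵀ * kTilde p m α := by
  rw [kTilde, transpose_fin_two_of, mul_fin_two, mul_fin_two, of_fin_two_eq_iff]
  refine ⟨?_, ?_, ?_, ?_⟩
  · linear_combination α * (p + m) * (ι * h + hι)
  all_goals ring

end KTilde

/-- The intertwining relation `K̃(u) Aᵢ K̃(u)⁻¹ = Ãᵢᵀ` for the matrices arising
in the proof of integrability of the two-site coherent boundary state of the
non-compact `SL(2,ℝ)` spin chain. -/
theorem K_matrix_intertwining (u α : ℂ) (hα : α ≠ 0)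
    (h1 : u ≠ I / 2) (h2 : u ≠ -(I / 2))
    (K : Matrix (Fin 2) (Fin 2) ℂ)
    (hK : K = !![2 * u, (u + I / 2) * α; (u - I / 2) * α, 0])
    (A₁ A₂ A₃ A₄ tA₁ tA₂ tA₃ tA₄ : Matrix (Fin 2) (Fin 2) ℂ)
    (hA₁ : A₁ = !![(u + I / 2) ^ 2, I * α * (u + I / 2); 0, (u - I / 2) ^ 2])
    (htA₁ : tA₁ = !![(u + I / 2) ^ 2, I * α * (u - I / 2); 0, (u - I / 2) ^ 2])
    (hA₂ : A₂ = !![0, 0; I * (u + I / 2), -α])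
    (htA₂ : tA₂ = !![-α, 0; I * (u - I / 2), 0])
    (hA₃ : A₃ = !![I * α * (u + I / 2), I * α ^ 2 * (u + I / 2);
                   I * (u - I / 2), -(I * α * (u - I / 2))])
    (htA₃ : tA₃ = !![I * α * (u + I / 2), I * α ^ 2 * (u - I / 2);
                     I * (u + I / 2), -(I * α * (u - I / 2))])
    (hA₄ : A₄ = !![0, 0; -α, -α ^ 2])
    (htA₄ : tA₄ = !![-α ^ 2, 0; α, 0]) :
    K * A₁ * K⁻¹ = tA₁ᵀ ∧ K * A₂ * K⁻¹ = tA₂ᵀ ∧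
    K * A₃ * K⁻¹ = tA₃ᵀ ∧ K * A₄ * K⁻¹ = tA₄ᵀ := by
  have hp : u + I / 2 ≠ 0 := fun h => h2 (eq_neg_of_add_eq_zero_left h)
  have hm : u - I / 2 ≠ 0 := sub_ne_zero.mpr h1
  have hpm : u + I / 2 - (u - I / 2) = I := by ring
  have hK' : K = kTilde (u + I / 2) (u - I / 2) α := by
    rw [hK, kTilde, add_add_sub_cancel, two_mul]
  have hdet : IsUnit K.det := by
    rw [hK', det_kTilde]
    exact (neg_ne_zero.mpr (mul_ne_zero (mul_ne_zero hp hm) (pow_ne_zero 2 hα))).isUnit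
  subst hK' hA₁ hA₂ hA₃ hA₄ htA₁ htA₂ htA₃ htA₄
  exact ⟨mul_mul_nonsing_inv_of_mul_eq hdet (kTilde_mul_A₁ α hpm),
    mul_mul_nonsing_inv_of_mul_eq hdet (kTilde_mul_A₂ α I_sq hpm),
    mul_mul_nonsing_inv_of_mul_eq hdet (kTilde_mul_A₃ _ _ α),
    mul_mul_nonsing_inv_of_mul_eq hdet (kTilde_mul_A₄ _ _ α)⟩
end
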